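/- Let M be an X-graded module over a ring, with each graded piece M_λ finite dimensional over a field k, and suppose M is generated (as a module) by the finite-dimensional sum of graded pieces over a finite set B ⊆ X. Then any graded endomorphism f of M admits a Fitting decomposition: there exists n > 0 with M = im(fⁿ) ⊕ ker(fⁿ). -/

import Mathlib

/-!
The weight spaces over `B` span a finite-dimensional `f`-stable subspace `N` that generates `M`,
so `range (f ^ m)` is the `R`-span of `f ^ m (N)`. These images form a descending chain of
subspaces of `N`, hence the ranges stabilize, and stable ranges already give
`range fⁿ ⊔ ker fⁿ = ⊤`. For `range fⁿ ⊓ ker fⁿ = ⊥`, project to a single weight space: the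
projection commutes with `f`, and on a finite-dimensional space the classical Fitting lemma holds
for every large exponent.
-/

open LinearMap

theorem LinearMap.restrictScalars_pow {k R M : Type*} [Semiring k] [Semiring R]
    [AddCommMonoid M] [Module k M] [Module R M] [LinearMap.CompatibleSMul M M k R]
    (f : Module.End R M) (n : ℕ) : (f ^ n).restrictScalars k = f.restrictScalars k ^ n := by
  ext x
  simp [Module.End.pow_apply]

theorem Module.End.codisjoint_range_pow_ker_pow {R M : Type*} [Ring R] [AddCommGroup M]
    [Module R M] {f : Module.End R M} {n : ℕ} (h : range (f ^ (n + n)) = range (f ^ n)) :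
    Codisjoint (range (f ^ n)) (ker (f ^ n)) := by
  refine codisjoint_iff.mpr (Submodule.eq_top_iff'.mpr fun x => ?_)
  obtain ⟨y, hy⟩ : (f ^ n) x ∈ range (f ^ (n + n)) := h ▸ mem_range_self _ x
  refine Submodule.mem_sup.mpr ⟨(f ^ n) y, mem_range_self _ y, x - (f ^ n) y, ?_, by abel⟩
  rw [mem_ker, map_sub, ← Module.End.mul_apply, ← pow_add, hy, sub_self]

theorem Module.End.exists_range_pow_eq_of_span_eq_top {k R M : Type*} [CommRing k] [Ring R]
    [Algebra k R] [AddCommGroup M] [Module k M] [Module R M] [IsScalarTower k R M]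
    {N : Submodule k M} [IsArtinian k N] (hN : Submodule.span R (N : Set M) = ⊤)
    {f : Module.End R M} (hfN : ∀ x ∈ N, f x ∈ N) :
    ∃ n, ∀ m, n ≤ m → range (f ^ m) = range (f ^ n) := by
  set fN := (f.restrictScalars k).restrict hfN
  have hcoe : ∀ m (x : N), ((fN ^ m) x : M) = (f ^ m) x := by
    intro m
    induction m with
    | zero => exact fun x => rfl
    | succ m ih => exact fun x => by rw [pow_succ', pow_succ', Module.End.mul_apply,
        Module.End.mul_apply, ← ih]; rfl
  have hrange : ∀ m, range (f ^ m) = Submodule.span R (N.subtype '' range (fN ^ m)) := by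
    intro m
    rw [← Submodule.map_top, ← hN, Submodule.map_span, LinearMap.coe_range, ← Set.range_comp,
      show N.subtype ∘ (fN ^ m) = (f ^ m) ∘ N.subtype from funext (hcoe m), Set.range_comp,
      Submodule.coe_subtype, Subtype.range_coe]
  obtain ⟨n, hchain⟩ := IsArtinian.monotone_stabilizes fN.iterateRange
  have hn : ∀ m, n ≤ m → range (fN ^ m) = range (fN ^ n) := fun m hm => (hchain m hm).symm
  exact ⟨n, fun m hm => by rw [hrange, hrange, hn m hm]⟩

namespace DirectSum.IsInternal

variable {k M X : Type*} [DecidableEq X] [Ring k] [AddCommGroup M] [Module k M]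
  {g : X → Submodule k M}

theorem ofBijective_coeLinearMap_symm_map_apply (hint : IsInternal g) {f : Module.End k M}
    (hf : ∀ i, ∀ x ∈ g i, f x ∈ g i) (x : M) (i : X) :
    (LinearEquiv.ofBijective (coeLinearMap g) hint).symm (f x) i
      = f.restrict (hf i) ((LinearEquiv.ofBijective (coeLinearMap g) hint).symm x i) := by
  set D := LinearEquiv.ofBijective (coeLinearMap g) hint
  obtain ⟨u, rfl⟩ := D.surjective x
  rw [D.symm_apply_apply]
  induction u using DirectSum.induction_on generalizing i with
  | zero => simp
  | of j c =>
    rw [show D (of _ j c) = c from coeLinearMap_of _ _ _]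
    by_cases hij : i = j
    · subst hij
      rw [of_eq_same, hint.ofBijective_coeLinearMap_of_mem (hf i c c.2)]
      rfl
    · rw [of_eq_of_ne _ _ _ hij, map_zero,
        hint.ofBijective_coeLinearMap_of_mem_ne (Ne.symm hij) (hf j c c.2)]
  | add u v hu hv => simp only [map_add, DirectSum.add_apply, hu, hv]

theorem disjoint_range_pow_ker_pow (hint : IsInternal g) [∀ i, IsNoetherian k (g i)]
    {f : Module.End k M} (hf : ∀ i, ∀ x ∈ g i, f x ∈ g i) {n : ℕ}
    (h : ∀ m, n ≤ m → range (f ^ m) = range (f ^ n)) :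
    Disjoint (range (f ^ n)) (ker (f ^ n)) := by
  set D := LinearEquiv.ofBijective (coeLinearMap g) hint
  refine Submodule.disjoint_def.mpr fun x hxr hxk => ?_
  suffices D.symm x = 0 by simpa using congrArg D this
  ext i
  obtain ⟨m, hm, hnm⟩ := ((Module.End.eventually_disjoint_ker_pow_range_pow
    (f.restrict (hf i))).and (Filter.eventually_ge_atTop n)).exists
  rw [Module.End.pow_restrict] at hm
  have hker : (f ^ m) x = 0 := by
    rw [← Nat.sub_add_cancel hnm, pow_add, Module.End.mul_apply, mem_ker.mp hxk, map_zero]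
  obtain ⟨y, rfl⟩ : x ∈ range (f ^ m) := h m hnm ▸ hxr
  have hpow := fun j => Module.End.pow_apply_mem_of_forall_mem m (hf j)
  have := Submodule.disjoint_def.mp hm (D.symm ((f ^ m) y) i) ?_ ⟨D.symm y i, ?_⟩
  · simpa using this
  · rw [mem_ker, ← ofBijective_coeLinearMap_symm_map_apply hint hpow, hker, map_zero]
    rfl
  · exact (ofBijective_coeLinearMap_symm_map_apply hint hpow y i).symm

end DirectSum.IsInternal

/-- Fitting's lemma in the modular category O: let `M` be an `X`-graded module over a
`k`-algebra `R` (the hyperalgebra), with each graded piece (weight space) `g λ` finite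
dimensional over the field `k`, and suppose `M` is generated as an `R`-module by the
sum of the graded pieces over a finite set `B ⊆ X`.  Then any graded `R`-module
endomorphism `f` of `M` admits a Fitting decomposition: there is `n > 0` with
`M = im (fⁿ) ⊕ ker (fⁿ)`. -/
theorem stmt4 {k R M X : Type*} [DecidableEq X] [Field k] [Ring R] [Algebra k R]
    [AddCommGroup M] [Module k M] [Module R M] [IsScalarTower k R M]
    (g : X → Submodule k M) (hint : DirectSum.IsInternal g)
    (hfin : ∀ lam : X, FiniteDimensional k (g lam))
    (B : Finset X)
    (hgen : Submodule.span R (⋃ lam ∈ B, (g lam : Set M)) = ⊤)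
    (f : Module.End R M) (hf : ∀ lam : X, ∀ x ∈ g lam, f x ∈ g lam) :
    ∃ n : ℕ, 0 < n ∧ IsCompl (LinearMap.range (f ^ n)) (LinearMap.ker (f ^ n)) := by
  have hN : Submodule.span R ((B.sup g : Submodule k M) : Set M) = ⊤ :=
    top_le_iff.mp <| hgen ▸
      Submodule.span_mono (Set.iUnion₂_subset fun i hi => Finset.le_sup (f := g) hi)
  have hfN : ∀ x ∈ B.sup g, f x ∈ B.sup g := by
    rw [Finset.sup_eq_iSup]
    exact mapsTo_biSup_of_mapsTo (f := f.restrictScalars k) _ hf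
  obtain ⟨n, hn⟩ := Module.End.exists_range_pow_eq_of_span_eq_top hN hfN
  have hstab : ∀ m, n + 1 ≤ m → range (f ^ m) = range (f ^ (n + 1)) := fun m hm =>
    (hn m (by omega)).trans (hn (n + 1) (by omega)).symm
  refine ⟨n + 1, n.succ_pos, ?_, Module.End.codisjoint_range_pow_ker_pow (hstab _ (by omega))⟩
  rw [← Submodule.disjoint_restrictScalars_iff k, ← range_restrictScalars, ← ker_restrictScalars,
    restrictScalars_pow]
  refine hint.disjoint_range_pow_ker_pow hf fun m hm => ?_
  rw [← restrictScalars_pow, ← restrictScalars_pow, range_restrictScalars, range_restrictScalars,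
    hstab m hm]
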